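/- General definability of determinacy via non-contingency: for every n ∈ ℕ, formulas A₁,…,Aₙ,B, Kripke model M = (W,R,V) and world w: M,w ⊨ D(A₁,…,Aₙ;B) if and only if for every subset T ⊆ {1,…,n}, M,w ⊨ Δ(B_T → B) ∨ Δ(B_T → ¬B), where B_T is the conjunction C₁ ∧ … ∧ Cₙ with Cᵢ = Aᵢ if i ∈ T and Cᵢ = ¬Aᵢ otherwise. -/

import Mathlib

/-- Non-contingency: M,w ⊨ Δ C. -/
def nonCont {W : Type*} (R : W → W → Prop) (w : W) (C : W → Prop) : Prop :=
  ∀ u v, R w u → R w v → (C u ↔ C v)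

/-- Determinacy: M,w ⊨ D(A₁,…,Aₙ;B). -/
def detN {W : Type*} (n : ℕ) (R : W → W → Prop) (w : W) (A : Fin n → W → Prop)
    (B : W → Prop) : Prop :=
  ∀ u v, R w u → R w v → (∀ i, A i u ↔ A i v) → (B u ↔ B v)

/-- B_T : the conjunction whose i-th conjunct is Aᵢ if i ∈ T, ¬Aᵢ otherwise. -/
def BT {W : Type*} {n : ℕ} (A : Fin n → W → Prop) (T : Finset (Fin n)) (u : W) : Prop :=
  ∀ i, if i ∈ T then A i u else ¬ A i u

/- Among the successors of w, B_T picks out exactly those on which the Aᵢ take the truth values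
prescribed by T. So D(A₁,…,Aₙ;B) says that B is constant on each of these classes, and
Δ(C → B) ∨ Δ(C → ¬B) says precisely that B is constant on the C-successors: C → B holds
everywhere if some C-successor satisfies B, and C → ¬B holds everywhere otherwise. -/

theorem BT_iff {W : Type*} {n : ℕ} (A : Fin n → W → Prop) (T : Finset (Fin n)) (u : W) :
    BT A T u ↔ ∀ i, (i ∈ T ↔ A i u) := by
  refine forall_congr' fun i => ?_
  by_cases hi : i ∈ T <;> simp [hi]

theorem exists_BT {W : Type*} {n : ℕ} (A : Fin n → W → Prop) (u : W) :
    ∃ T : Finset (Fin n), BT A T u := by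
  classical
  exact ⟨Finset.univ.filter (A · u), (BT_iff A _ u).2 fun i => by simp⟩

theorem nonCont_imp_or_nonCont_imp_not_iff {W : Type*} (R : W → W → Prop) (w : W)
    (C B : W → Prop) :
    nonCont R w (fun u => C u → B u) ∨ nonCont R w (fun u => C u → ¬ B u) ↔
      ∀ u v, R w u → R w v → C u → C v → (B u ↔ B v) := by
  constructor
  · rintro (h | h) u v hu hv hCu hCv <;> have := h u v hu hv <;> tauto
  · intro hconst
    by_cases hB : ∃ u, R w u ∧ C u ∧ B u
    · obtain ⟨u₀, hu₀, hCu₀, hBu₀⟩ := hB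
      have hall : ∀ v, R w v → C v → B v := fun v hv hCv =>
        (hconst u₀ v hu₀ hv hCu₀ hCv).1 hBu₀
      exact Or.inl fun u v hu hv => ⟨fun _ => hall v hv, fun _ => hall u hu⟩
    · push Not at hB
      exact Or.inr fun u v hu hv => ⟨fun _ => hB v hv, fun _ => hB u hu⟩

theorem detN_iff_forall_BT {W : Type*} (n : ℕ) (R : W → W → Prop) (w : W)
    (A : Fin n → W → Prop) (B : W → Prop) :
    detN n R w A B ↔
      ∀ T : Finset (Fin n), ∀ u v, R w u → R w v → BT A T u → BT A T v → (B u ↔ B v) := by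
  simp only [BT_iff]
  constructor
  · intro hD T u v hu hv hTu hTv
    exact hD u v hu hv fun i => (hTu i).symm.trans (hTv i)
  · intro h u v hu hv hA
    obtain ⟨T, hTu⟩ := exists_BT A u
    rw [BT_iff] at hTu
    exact h T u v hu hv hTu fun i => (hTu i).trans (hA i)

theorem detN_def_nonCont_general {W : Type*} (n : ℕ) (R : W → W → Prop)
    (w : W) (A : Fin n → W → Prop) (B : W → Prop) :
    detN n R w A B ↔
      ∀ T : Finset (Fin n),
        nonCont R w (fun u => BT A T u → B u) ∨
        nonCont R w (fun u => BT A T u → ¬ B u) := by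
  rw [detN_iff_forall_BT]
  exact forall_congr' fun T => (nonCont_imp_or_nonCont_imp_not_iff R w (BT A T) B).symm

theorem detN_def_nonCont {W : Type*} (n : ℕ) (R : W → W → Prop) (V : ℕ → W → Prop)
    (w : W) (A : Fin n → W → Prop) (B : W → Prop) :
    detN n R w A B ↔
      ∀ T : Finset (Fin n),
        nonCont R w (fun u => BT A T u → B u) ∨
        nonCont R w (fun u => BT A T u → ¬ B u) :=
  detN_def_nonCont_general n R w A B
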